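/- Let γ be a C¹-smooth closed Jordan arc in the open unit disk which is a hyperbolic geodesic segment, i.e. γ is the image of a real segment under a disk automorphism φ. Then there is a constant C > 0 such that for every g ∈ H² there exists h ∈ H² with h = ḡ on γ and ‖h‖₂ ≤ C‖g‖₂; specifically, h(z) = conj(g(φ(conj(φ⁻¹(z))))) works. -/

import Mathlib

open MeasureTheory Complex Real Polynomial Metric Filter intervalIntegral

noncomputable section

/-- Mean of `‖g‖²` over the circle of radius `ρ` (normalized). -/
def diskInt (g : ℂ → ℂ) (ρ : ℝ) : ℝ :=
  (2 * π)⁻¹ * ∫ θ in (0 : ℝ)..(2 * π), ‖g ((ρ : ℂ) * Complex.exp ((θ : ℂ) * Complex.I))‖ ^ 2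

/-- Squared H² norm: the sup over `0 ≤ ρ < 1` of the means over circles of radius `ρ`. -/
def h2normSq (g : ℂ → ℂ) : ℝ := ⨆ ρ : Set.Ico (0 : ℝ) 1, diskInt g (ρ : ℝ)

/-- H² norm. -/
def h2norm (g : ℂ → ℂ) : ℝ := Real.sqrt (h2normSq g)

/-- H² distance from `f` to a set `S`. -/
def d2disk (f : ℂ → ℂ) (S : Set (ℂ → ℂ)) : ℝ :=
  sInf {x | ∃ r ∈ S, x = h2norm (fun z => f z - r z)}

/-- Rational functions of type `(m, n)` analytic in the closed unit disk. -/
def RmnDisk (m n : ℕ) : Set (ℂ → ℂ) :=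
  {r | ∃ p q : Polynomial ℂ, p.natDegree ≤ m ∧ q.natDegree ≤ n ∧
      (∀ z : ℂ, ‖z‖ ≤ 1 → q.eval z ≠ 0) ∧
      ∀ z : ℂ, ‖z‖ ≤ 1 → r z = p.eval z / q.eval z}

/-- The Blaschke factor with zero `ζ` (the factor `z` when `ζ = 0`). -/
def bFactor (ζ z : ℂ) : ℂ :=
  if ζ = 0 then z
  else (-(starRingEnd ℂ) ζ / (‖ζ‖ : ℂ)) * ((z - ζ) / (1 - (starRingEnd ℂ) ζ * z))

/-- `b` is a Blaschke product of degree `d` (finite or infinite) with zero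
sequence `ζ`, up to a unimodular constant `c`. -/
def IsBlaschke (b : ℂ → ℂ) (ζ : ℕ → ℂ) (d : ℕ∞) : Prop :=
  ∃ c : ℂ, ‖c‖ = 1 ∧
    ((∃ m : ℕ, d = (m : ℕ∞) ∧ (∀ i, i < m → ‖(ζ i)‖ < 1) ∧
        ∀ z : ℂ, ‖z‖ ≤ 1 → b z = c * ∏ i ∈ Finset.range m, bFactor (ζ i) z) ∨
     (d = ⊤ ∧ (∀ i, ‖(ζ i)‖ < 1) ∧
        Summable (fun i => 1 - ‖(ζ i)‖) ∧
        ∀ z : ℂ, ‖z‖ < 1 → HasProd (fun i => bFactor (ζ i) z) (b z / c)))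

/-- A Möbius automorphism of the unit disk. -/
def moeb (α z₀ : ℂ) (z : ℂ) : ℂ := α * (z - z₀) / (1 - (starRingEnd ℂ) z₀ * z)

/-- The inverse of the Möbius automorphism moeb α z₀. -/
def moebInv (α z₀ : ℂ) (w : ℂ) : ℂ :=
  (w / α + z₀) / (1 + (starRingEnd ℂ) z₀ * (w / α))

/-- The conjugation h(z) = conj (g (φ (conj (φ⁻¹ z)))) across the geodesic
γ = φ([a,b]). -/
def conjug (α z₀ : ℂ) (g : ℂ → ℂ) (z : ℂ) : ℂ :=
  (starRingEnd ℂ) (g (moeb α z₀ ((starRingEnd ℂ) (moebInv α z₀ z))))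

def Complex.abs : AbsoluteValue ℂ ℝ where
  toFun z := ‖z‖
  add_le' := norm_add_le
  eq_zero' _ := norm_eq_zero
  nonneg' := norm_nonneg
  map_mul' := norm_mul

lemma Complex.norm_eq_abs (z : ℂ) : ‖z‖ = Complex.abs z := rfl

lemma Complex.abs_conj (z : ℂ) : Complex.abs ((starRingEnd ℂ) z) = Complex.abs z :=
  Complex.norm_conj z

lemma Complex.sq_abs (z : ℂ) : Complex.abs z ^ 2 = normSq z := Complex.sq_norm z

lemma Complex.abs_ofReal (r : ℝ) : Complex.abs (r : ℂ) = |r| := Complex.norm_real r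

lemma Complex.abs_exp_ofReal_mul_I (x : ℝ) : Complex.abs (Complex.exp (x * I)) = 1 :=
  Complex.norm_exp_ofReal_mul_I x

lemma one_sub_ne {u : ℂ} (h : Complex.abs u < 1) : (1:ℂ) - u ≠ 0 := by
  intro h0
  have : u = 1 := by linear_combination -h0
  simp [this] at h

lemma den_ne {z₀ z : ℂ} (h : Complex.abs z₀ * Complex.abs z < 1) :
    (1:ℂ) - (starRingEnd ℂ) z₀ * z ≠ 0 := by
  apply one_sub_ne
  rwa [map_mul, Complex.abs_conj]

lemma normSq_identity (u v : ℂ) :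
    normSq (1 - (starRingEnd ℂ) u * v) - normSq (v - u) = (1 - normSq v) * (1 - normSq u) := by
  simp [Complex.normSq_apply, Complex.sub_re, Complex.sub_im, Complex.mul_re, Complex.mul_im,
    Complex.conj_re, Complex.conj_im, Complex.one_re, Complex.one_im]
  ring

lemma normSq_moeb {α z₀ : ℂ} (hα : Complex.abs α = 1) (z : ℂ) :
    normSq (moeb α z₀ z) = normSq (z - z₀) / normSq (1 - (starRingEnd ℂ) z₀ * z) := by
  have hα' : normSq α = 1 := by rw [← Complex.sq_abs, hα]; norm_num
  simp [moeb, map_div₀, map_mul, hα']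

lemma moebInv_eq {α : ℂ} (hα : Complex.abs α = 1) (z₀ : ℂ) :
    moebInv α z₀ = moeb (starRingEnd ℂ α) (-(α * z₀)) := by
  have hα0 : α ≠ 0 := by intro h; simp [h] at hα
  have hinv : (starRingEnd ℂ) α = α⁻¹ := by
    rw [Complex.inv_def, ← Complex.sq_abs, hα]; simp
  funext w
  simp only [moebInv, moeb, hinv, map_neg, map_mul]
  have hn : w / α + z₀ = α⁻¹ * (w - -(α * z₀)) := by
    field_simp; ring
  have hd : 1 + (starRingEnd ℂ) z₀ * (w / α) = 1 - -(α⁻¹ * (starRingEnd ℂ) z₀) * w := by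
    rw [div_eq_mul_inv]; ring
  rw [hn, hd]

lemma normSq_moeb_le {α z₀ : ℂ} (hz₀ : Complex.abs z₀ < 1) (hα : Complex.abs α = 1)
    {ρ : ℝ} (hρ : ρ < 1) {z : ℂ} (hz : Complex.abs z ≤ ρ) :
    normSq (moeb α z₀ z) ≤
      1 - (1 - ρ^2) * (1 - Complex.abs z₀ ^ 2) / (1 + Complex.abs z₀)^2 := by
  set a := Complex.abs z₀ with ha
  have ha0 : 0 ≤ a := Complex.abs.nonneg _
  have hρ0 : 0 ≤ ρ := le_trans (Complex.abs.nonneg z) hz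
  have hden_pos : 0 < normSq (1 - (starRingEnd ℂ) z₀ * z) := by
    rw [Complex.normSq_pos]
    exact den_ne (by nlinarith [Complex.abs.nonneg z])
  have hden_le : normSq (1 - (starRingEnd ℂ) z₀ * z) ≤ (1 + a)^2 := by
    have h1 : Complex.abs (1 - (starRingEnd ℂ) z₀ * z) ≤ 1 + a := by
      calc Complex.abs (1 - (starRingEnd ℂ) z₀ * z)
          ≤ Complex.abs 1 + Complex.abs ((starRingEnd ℂ) z₀ * z) := by
            simpa [sub_eq_add_neg] using Complex.abs.add_le 1 (-((starRingEnd ℂ) z₀ * z))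
        _ ≤ 1 + a := by
            simp only [map_one, map_mul, Complex.abs_conj]
            nlinarith [Complex.abs.nonneg z]
    rw [← Complex.sq_abs]
    nlinarith [Complex.abs.nonneg (1 - (starRingEnd ℂ) z₀ * z)]
  have hkey : normSq (moeb α z₀ z) =
      1 - (1 - normSq z) * (1 - normSq z₀) / normSq (1 - (starRingEnd ℂ) z₀ * z) := by
    rw [normSq_moeb hα]
    have := normSq_identity z₀ z
    rw [eq_sub_iff_add_eq, ← add_div, div_eq_one_iff_eq hden_pos.ne']
    linarith
  rw [hkey]
  have hnum_le : (1 - ρ^2) * (1 - a^2) ≤ (1 - normSq z) * (1 - normSq z₀) := by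
    have h1 : normSq z ≤ ρ^2 := by rw [← Complex.sq_abs]; nlinarith [Complex.abs.nonneg z]
    have h2 : normSq z₀ = a^2 := by rw [← Complex.sq_abs]
    have h3 : normSq z₀ < 1 := by rw [h2]; nlinarith
    nlinarith [Complex.normSq_nonneg z, Complex.normSq_nonneg z₀]
  have h1ρ : 0 < 1 - ρ^2 := by nlinarith
  have h1a : 0 < 1 - a^2 := by nlinarith
  have hnum2 : 0 ≤ (1 - normSq z) * (1 - normSq z₀) := le_trans (by positivity) hnum_le
  have : (1 - ρ^2) * (1 - a^2) / (1 + a)^2 ≤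
      (1 - normSq z) * (1 - normSq z₀) / normSq (1 - (starRingEnd ℂ) z₀ * z) :=
    div_le_div₀ hnum2 hnum_le hden_pos hden_le
  linarith

lemma abs_moeb_lt {α z₀ : ℂ} (hz₀ : Complex.abs z₀ < 1) (hα : Complex.abs α = 1)
    {z : ℂ} (hz : Complex.abs z < 1) : Complex.abs (moeb α z₀ z) < 1 := by
  have h := normSq_moeb_le hz₀ hα (ρ := Complex.abs z) hz (le_refl _)
  set a := Complex.abs z₀
  have ha0 : 0 ≤ a := Complex.abs.nonneg _
  have h1ρ : 0 < 1 - Complex.abs z ^ 2 := by nlinarith [Complex.abs.nonneg z]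
  have h1a : 0 < 1 - a^2 := by nlinarith
  have hpos : 0 < (1 - Complex.abs z ^ 2) * (1 - a^2) / (1 + a)^2 := by positivity
  have h2 : normSq (moeb α z₀ z) < 1 := by linarith
  rw [← Complex.sq_abs] at h2
  nlinarith [Complex.abs.nonneg (moeb α z₀ z)]

lemma moebInv_moeb {α z₀ : ℂ} (hz₀ : Complex.abs z₀ < 1) (hα : Complex.abs α = 1)
    {z : ℂ} (hz : Complex.abs z < 1) : moebInv α z₀ (moeb α z₀ z) = z := by
  have hα0 : α ≠ 0 := by intro h; simp [h] at hα
  have hden : (1:ℂ) - (starRingEnd ℂ) z₀ * z ≠ 0 :=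
    den_ne (by nlinarith [Complex.abs.nonneg z, Complex.abs.nonneg z₀])
  have hz₀1 : (1:ℂ) - (starRingEnd ℂ) z₀ * z₀ ≠ 0 := by
    rw [show (starRingEnd ℂ) z₀ * z₀ = (normSq z₀ : ℂ) from by rw [mul_comm, Complex.mul_conj]]
    intro h
    have : (normSq z₀ : ℂ) = 1 := by linear_combination -h
    have h2 : normSq z₀ = 1 := by exact_mod_cast this
    rw [← Complex.sq_abs] at h2; nlinarith [Complex.abs.nonneg z₀]
  have h1 : moeb α z₀ z / α = (z - z₀) / (1 - (starRingEnd ℂ) z₀ * z) := by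
    rw [moeb]; field_simp
  rw [moebInv, h1]
  have hd2 : 1 + (starRingEnd ℂ) z₀ * ((z - z₀) / (1 - (starRingEnd ℂ) z₀ * z)) =
      (1 - (starRingEnd ℂ) z₀ * z₀) / (1 - (starRingEnd ℂ) z₀ * z) := by
    field_simp; ring
  have hn2 : (z - z₀) / (1 - (starRingEnd ℂ) z₀ * z) + z₀ =
      z * (1 - (starRingEnd ℂ) z₀ * z₀) / (1 - (starRingEnd ℂ) z₀ * z) := by
    rw [div_add' _ _ _ hden]; congr 1; ring
  rw [hd2, hn2]
  rw [div_div_div_cancel_right₀]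
  · exact mul_div_cancel_right₀ z hz₀1
  · exact hden

lemma one_add_ne {u : ℂ} (h : Complex.abs u < 1) : (1:ℂ) + u ≠ 0 := by
  have := one_sub_ne (u := -u) (by simpa using h)
  simpa [sub_neg_eq_add] using this

lemma moeb_moebInv {α z₀ : ℂ} (hz₀ : Complex.abs z₀ < 1) (hα : Complex.abs α = 1)
    {w : ℂ} (hw : Complex.abs w < 1) : moeb α z₀ (moebInv α z₀ w) = w := by
  have hα0 : α ≠ 0 := by intro h; simp [h] at hα
  have hαa : Complex.abs (w / α) = Complex.abs w := by
    rw [map_div₀, hα, div_one]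
  set c := (starRingEnd ℂ) z₀ with hc
  set v := w / α with hv
  have hden : (1:ℂ) + c * v ≠ 0 := by
    apply one_add_ne
    rw [hc, hv, map_mul, Complex.abs_conj, hαa]
    nlinarith [Complex.abs.nonneg w, Complex.abs.nonneg z₀]
  have hz₀1 : (1:ℂ) - c * z₀ ≠ 0 := by
    rw [hc, show (starRingEnd ℂ) z₀ * z₀ = (normSq z₀ : ℂ) from by rw [mul_comm, Complex.mul_conj]]
    intro h
    have : (normSq z₀ : ℂ) = 1 := by linear_combination -h
    have h2 : normSq z₀ = 1 := by exact_mod_cast this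
    rw [← Complex.sq_abs] at h2; nlinarith [Complex.abs.nonneg z₀]
  set d := (1:ℂ) + c * v with hd
  have hmi : moebInv α z₀ w = (v + z₀) / d := rfl
  have hn : moebInv α z₀ w - z₀ = v * (1 - c * z₀) / d := by
    rw [hmi]; field_simp; ring
  have hdd : 1 - c * moebInv α z₀ w = (1 - c * z₀) / d := by
    rw [hmi]; field_simp; ring
  rw [moeb, ← hc, hn, hdd, mul_div_assoc', div_div_div_cancel_right₀ hden,
    mul_div_assoc, mul_div_cancel_right₀ _ hz₀1, hv, mul_div_cancel₀ _ hα0]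

/-- conj ∘ H ∘ conj is differentiable. -/
lemma differentiableAt_conj_comp {H : ℂ → ℂ} {w : ℂ}
    (h : DifferentiableAt ℂ H ((starRingEnd ℂ) w)) :
    DifferentiableAt ℂ (fun z => (starRingEnd ℂ) (H ((starRingEnd ℂ) z))) w := by
  obtain ⟨d, hd⟩ : ∃ d, HasDerivAt H d ((starRingEnd ℂ) w) := ⟨_, h.hasDerivAt⟩
  have hslope : Filter.Tendsto (slope H ((starRingEnd ℂ) w))
      (nhdsWithin ((starRingEnd ℂ) w) {((starRingEnd ℂ) w)}ᶜ) (nhds d) :=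
    hasDerivAt_iff_tendsto_slope.mp hd
  have hconj : Filter.Tendsto (fun z : ℂ => (starRingEnd ℂ) z)
      (nhdsWithin w {w}ᶜ) (nhdsWithin ((starRingEnd ℂ) w) {((starRingEnd ℂ) w)}ᶜ) := by
    rw [tendsto_nhdsWithin_iff]
    constructor
    · exact ((Complex.continuous_conj).tendsto w).mono_left nhdsWithin_le_nhds
    · filter_upwards [self_mem_nhdsWithin] with z hz
      simp only [Set.mem_compl_iff, Set.mem_singleton_iff] at hz ⊢
      exact fun hc => hz (by simpa using congrArg (starRingEnd ℂ) hc)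
  have key : Filter.Tendsto (slope (fun z => (starRingEnd ℂ) (H ((starRingEnd ℂ) z))) w)
      (nhdsWithin w {w}ᶜ) (nhds ((starRingEnd ℂ) d)) := by
    have heq : ∀ z : ℂ, slope (fun z => (starRingEnd ℂ) (H ((starRingEnd ℂ) z))) w z
        = (starRingEnd ℂ) (slope H ((starRingEnd ℂ) w) ((starRingEnd ℂ) z)) := by
      intro z
      simp only [slope_def_field]
      rw [map_div₀, map_sub, map_sub, Complex.conj_conj, Complex.conj_conj]
    have : Filter.Tendsto (fun z => (starRingEnd ℂ) (slope H ((starRingEnd ℂ) w) ((starRingEnd ℂ) z)))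
        (nhdsWithin w {w}ᶜ) (nhds ((starRingEnd ℂ) d)) :=
      ((Complex.continuous_conj.tendsto d).comp (hslope.comp hconj))
    exact this.congr (fun z => (heq z).symm)
  exact ⟨_, hasDerivAt_iff_tendsto_slope.mpr key⟩

lemma differentiableAt_moeb (α z₀ : ℂ) {z : ℂ} (h : (1:ℂ) - (starRingEnd ℂ) z₀ * z ≠ 0) :
    DifferentiableAt ℂ (fun z => α * (z - z₀) / (1 - (starRingEnd ℂ) z₀ * z)) z :=
  ((differentiableAt_const α).mul ((differentiableAt_id).sub (differentiableAt_const z₀))).div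
    ((differentiableAt_const 1).sub ((differentiableAt_const _).mul differentiableAt_id)) h

/-- Mean value property over circles, from the Cauchy integral formula. -/
lemma circleMean {f : ℂ → ℂ} {ρ : ℝ} (hρ : 0 ≤ ρ)
    (hf : DifferentiableOn ℂ f (closedBall 0 ρ)) :
    ∫ θ in (0:ℝ)..2*π, f ((ρ:ℂ) * Complex.exp (θ * I)) = 2*π * f 0 := by
  rcases eq_or_lt_of_le hρ with h0 | h0
  · have : ∀ θ : ℝ, f ((ρ:ℂ) * Complex.exp (θ * I)) = f 0 := by
      intro θ; rw [← h0]; norm_num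
    rw [intervalIntegral.integral_congr (fun θ _ => this θ)]
    simp [smul_eq_mul]
  · have h0' : (0:ℂ) ∈ ball (0:ℂ) ρ := by simpa using h0
    have := hf.circleIntegral_sub_inv_smul h0'
    rw [circleIntegral] at this
    simp only [deriv_circleMap, smul_eq_mul, sub_zero] at this
    have heq : ∀ θ ∈ Set.uIcc (0:ℝ) (2*π),
        circleMap 0 ρ θ * I * ((circleMap 0 ρ θ)⁻¹ * f (circleMap 0 ρ θ))
        = I * f ((ρ:ℂ) * Complex.exp (θ * I)) := by
      intro θ _
      have hρc : (ρ:ℂ) ≠ 0 := Complex.ofReal_ne_zero.mpr (ne_of_gt h0)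
      have he : Complex.exp (θ*I) ≠ 0 := Complex.exp_ne_zero _
      simp only [circleMap, zero_add]
      field_simp
    rw [intervalIntegral.integral_congr heq, intervalIntegral.integral_const_mul] at this
    have hI : (I : ℂ) ≠ 0 := I_ne_zero
    have : I * ∫ θ in (0:ℝ)..2*π, f ((ρ:ℂ) * Complex.exp (θ * I)) = I * (2*π*f 0) := by
      rw [this]; ring
    exact mul_left_cancel₀ hI this

def PP (r : ℝ) (z : ℂ) (t : ℝ) : ℝ :=
  (r^2 - normSq z) / normSq ((r:ℂ) * Complex.exp (t * I) - z)

lemma PP_nonneg {r : ℝ} {z : ℂ} (hz : Complex.abs z < r) (t : ℝ) : 0 ≤ PP r z t := by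
  apply div_nonneg _ (Complex.normSq_nonneg _)
  rw [← Complex.sq_abs]
  nlinarith [Complex.abs.nonneg z]

lemma poisson_bound {F : ℂ → ℂ} {r : ℝ} (hr0 : 0 < r)
    (hF : DifferentiableOn ℂ F (Metric.closedBall 0 r)) {z : ℂ} (hz : Complex.abs z < r) :
    ‖F z‖^2 ≤ (2*π)⁻¹ * ∫ t in (0:ℝ)..2*π, PP r z t * ‖F ((r:ℂ) * Complex.exp (t * I))‖^2 := by
  set Q : ℂ → ℂ := fun w => F w * F w with hQdef
  have hQ : DifferentiableOn ℂ Q (Metric.closedBall 0 r) := hF.mul hF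
  set N : ℂ := ((r^2 - normSq z : ℝ) : ℂ) with hN
  have hNpos : (0:ℝ) < r^2 - normSq z := by
    rw [← Complex.sq_abs]; nlinarith [Complex.abs.nonneg z]
  have hN0 : N ≠ 0 := by
    rw [hN]; exact_mod_cast Complex.ofReal_ne_zero.mpr (ne_of_gt hNpos)
  have hden : ∀ w : ℂ, Complex.abs w ≤ r → ((r^2:ℝ):ℂ) - (starRingEnd ℂ) z * w ≠ 0 := by
    intro w hw h
    have h1 : ((r^2:ℝ):ℂ) = (starRingEnd ℂ) z * w := by linear_combination h
    have h2 := congrArg Complex.abs h1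
    rw [map_mul, Complex.abs_conj, Complex.abs_ofReal] at h2
    have : |r^2| = r^2 := abs_of_pos (by positivity)
    rw [this] at h2
    nlinarith [Complex.abs.nonneg z, Complex.abs.nonneg w]
  set K : ℂ → ℂ := fun w => Q w * N / (((r^2:ℝ):ℂ) - (starRingEnd ℂ) z * w) with hK
  have hKd : DifferentiableOn ℂ K (Metric.closedBall 0 r) := by
    apply DifferentiableOn.div (hQ.mul (differentiableOn_const N))
    · exact (differentiableOn_const _).sub ((differentiableOn_const _).mul differentiableOn_id)
    · intro w hw
      exact hden w (by simpa [Complex.dist_eq, Complex.norm_eq_abs] using (mem_closedBall.mp hw))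
  have hzball : z ∈ ball (0:ℂ) r := by simpa [Complex.dist_eq, Complex.norm_eq_abs] using hz
  have cauchy := hKd.circleIntegral_sub_inv_smul hzball
  have hKz : K z = Q z := by
    rw [hK]
    simp only
    have h1 : (starRingEnd ℂ) z * z = (normSq z : ℂ) := by rw [mul_comm, Complex.mul_conj]
    have h2 : ((r^2:ℝ):ℂ) - (starRingEnd ℂ) z * z = N := by rw [h1, hN]; push_cast; ring
    rw [h2, mul_div_assoc, div_self hN0, mul_one]
  rw [hKz, circleIntegral] at cauchy
  simp only [deriv_circleMap, smul_eq_mul, sub_zero] at cauchy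
  have heq : ∀ θ ∈ Set.uIcc (0:ℝ) (2*π),
      circleMap 0 r θ * I * ((circleMap 0 r θ - z)⁻¹ * K (circleMap 0 r θ))
      = I * (((PP r z θ : ℝ):ℂ) * Q ((r:ℂ) * Complex.exp (θ * I))) := by
    intro θ _
    set w : ℂ := circleMap 0 r θ with hw
    have hwe : w = (r:ℂ) * Complex.exp (θ * I) := by simp [hw, circleMap]
    have hwne : w ≠ 0 := circleMap_ne_center (ne_of_gt hr0)
    have habsw : Complex.abs w = r := by
      rw [hwe, map_mul, Complex.abs_ofReal, abs_of_pos hr0, Complex.abs_exp_ofReal_mul_I, mul_one]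
    have hwz : w - z ≠ 0 := by
      intro h
      rw [sub_eq_zero] at h
      rw [← h, habsw] at hz
      exact lt_irrefl _ hz
    have hnswz : normSq (w - z) ≠ 0 := fun h => hwz (Complex.normSq_eq_zero.mp h)
    have hww : w * (starRingEnd ℂ) w = ((r^2:ℝ):ℂ) := by
      have : normSq w = r^2 := by rw [← Complex.sq_abs, habsw]
      rw [Complex.mul_conj, this]
    have hkey : (w - z) * (((r^2:ℝ):ℂ) - (starRingEnd ℂ) z * w)
        = w * ((normSq (w - z) : ℝ):ℂ) := by
      rw [show ((normSq (w - z) : ℝ):ℂ) = (w - z) * (starRingEnd ℂ) (w - z) from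
        (Complex.mul_conj _).symm, map_sub]
      linear_combination (z - w) * hww
    have hPP : ((PP r z θ : ℝ):ℂ) = N / ((normSq (w - z) : ℝ):ℂ) := by
      rw [PP, hN, hwe]; push_cast; ring
    have hD : (((r^2:ℝ):ℂ) - (starRingEnd ℂ) z * w) ≠ 0 := hden w (le_of_eq habsw)
    have hnsC : ((normSq (w - z) : ℝ):ℂ) ≠ 0 := Complex.ofReal_ne_zero.mpr hnswz
    have hinv : (w - z)⁻¹ * (((r^2:ℝ):ℂ) - (starRingEnd ℂ) z * w)⁻¹
        = (w * ((normSq (w - z) : ℝ):ℂ))⁻¹ := by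
      rw [← mul_inv, hkey]
    rw [hPP, ← hwe]
    calc w * I * ((w - z)⁻¹ * K w)
        = I * (Q w * N * ((w - z)⁻¹ * (((r^2:ℝ):ℂ) - (starRingEnd ℂ) z * w)⁻¹) * w) := by
          rw [hK]; simp only; rw [div_eq_mul_inv]; ring
      _ = I * (Q w * N * (w * ((normSq (w - z) : ℝ):ℂ))⁻¹ * w) := by rw [hinv]
      _ = I * (N / ((normSq (w - z) : ℝ):ℂ) * Q w) := by
          rw [mul_inv]; field_simp
  rw [intervalIntegral.integral_congr heq, intervalIntegral.integral_const_mul] at cauchy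
  have hIint : ∫ θ in (0:ℝ)..2*π, ((PP r z θ : ℝ):ℂ) * Q ((r:ℂ) * Complex.exp (θ * I))
      = 2*π*Q z := by
    have hI : (I : ℂ) ≠ 0 := I_ne_zero
    apply mul_left_cancel₀ hI
    rw [cauchy]; ring
  have h2πc : (2*(π:ℂ)) ≠ 0 := by
    simp [Real.pi_ne_zero, Complex.ofReal_ne_zero]
  have hQz : Q z = ((2*π:ℝ)⁻¹:ℂ) * ∫ θ in (0:ℝ)..2*π, ((PP r z θ : ℝ):ℂ) * Q ((r:ℂ) * Complex.exp (θ * I)) := by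
    rw [hIint]
    push_cast
    rw [← mul_assoc, inv_mul_cancel₀ h2πc, one_mul]
  have hnorm : ‖F z‖^2 = ‖Q z‖ := by
    rw [hQdef]; simp only [norm_mul]; ring
  rw [hnorm, hQz, norm_mul]
  have h1 : ‖(((2*π:ℝ)):ℂ)⁻¹‖ = (2*π)⁻¹ := by
    rw [norm_inv, Complex.norm_real, Real.norm_eq_abs, abs_of_pos (by positivity : (0:ℝ) < 2*π)]
  rw [h1]
  have h2 : ‖∫ θ in (0:ℝ)..2*π, ((PP r z θ : ℝ):ℂ) * Q ((r:ℂ) * Complex.exp (θ * I))‖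
      ≤ ∫ θ in (0:ℝ)..2*π, PP r z θ * ‖F ((r:ℂ) * Complex.exp (θ * I))‖^2 := by
    refine le_trans (intervalIntegral.norm_integral_le_integral_norm (by positivity)) ?_
    apply le_of_eq
    apply intervalIntegral.integral_congr
    intro t _
    dsimp only
    rw [norm_mul, Complex.norm_real, Real.norm_eq_abs, _root_.abs_of_nonneg (PP_nonneg hz t), hQdef]
    simp only [norm_mul]
    ring
  have hpi : (0:ℝ) < (2*π)⁻¹ := by positivity
  calc (2*π)⁻¹ * ‖∫ θ in (0:ℝ)..2*π, ((PP r z θ : ℝ):ℂ) * Q ((r:ℂ) * Complex.exp (θ * I))‖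
      ≤ (2*π)⁻¹ * ∫ θ in (0:ℝ)..2*π, PP r z θ * ‖F ((r:ℂ) * Complex.exp (θ * I))‖^2 := by
        exact mul_le_mul_of_nonneg_left h2 (le_of_lt hpi)

lemma circle_mem_closedBall {ρ : ℝ} (hρ : 0 ≤ ρ) (θ : ℝ) :
    (ρ:ℂ) * Complex.exp (θ * I) ∈ closedBall (0:ℂ) ρ := by
  simp only [mem_closedBall, Complex.dist_eq, sub_zero, map_mul, Complex.abs_ofReal,
    Complex.abs_exp_ofReal_mul_I, mul_one, norm_mul, Complex.norm_real,
    Complex.norm_exp_ofReal_mul_I, Real.norm_eq_abs]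
  exact le_of_eq (abs_of_nonneg hρ)

lemma continuous_circle (ρ : ℝ) : Continuous (fun θ : ℝ => (ρ:ℂ) * Complex.exp (θ * I)) :=
  continuous_const.mul (Complex.continuous_exp.comp ((Complex.continuous_ofReal).mul
    continuous_const))

lemma poisson_mean {τ : ℂ → ℂ} {ρ r : ℝ} (hρ : 0 ≤ ρ)
    (hτ : DifferentiableOn ℂ τ (closedBall 0 ρ))
    (hmap : ∀ ζ ∈ closedBall (0:ℂ) ρ, Complex.abs (τ ζ) < r) (t : ℝ) :
    ∫ θ in (0:ℝ)..2*π, PP r (τ ((ρ:ℂ) * Complex.exp (θ * I))) t = 2*π * PP r (τ 0) t := by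
  have h0mem : (0:ℂ) ∈ closedBall (0:ℂ) ρ := by simp [hρ]
  have hr0 : 0 < r := lt_of_le_of_lt (Complex.abs.nonneg _) (hmap 0 h0mem)
  set w : ℂ := (r:ℂ) * Complex.exp (t * I) with hw
  have habsw : Complex.abs w = r := by
    rw [hw, map_mul, Complex.abs_ofReal, abs_of_pos hr0, Complex.abs_exp_ofReal_mul_I, mul_one]
  have hw2 : normSq w = r^2 := by rw [← Complex.sq_abs, habsw]
  have hwz : ∀ ζ ∈ closedBall (0:ℂ) ρ, w - τ ζ ≠ 0 := by
    intro ζ hζ h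
    rw [sub_eq_zero] at h
    have := hmap ζ hζ
    rw [← h, habsw] at this
    exact lt_irrefl _ this
  set Φ : ℂ → ℂ := fun ζ => (w + τ ζ) / (w - τ ζ) with hΦ
  have hΦd : DifferentiableOn ℂ Φ (closedBall 0 ρ) :=
    ((differentiableOn_const w).add hτ).div ((differentiableOn_const w).sub hτ) hwz
  have hre : ∀ ζ ∈ closedBall (0:ℂ) ρ, (Φ ζ).re = PP r (τ ζ) t := by
    intro ζ hζ
    rw [hΦ]
    simp only
    rw [Complex.div_re, PP, ← hw]
    have hnum : (w + τ ζ).re * (w - τ ζ).re + (w + τ ζ).im * (w - τ ζ).im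
        = r^2 - normSq (τ ζ) := by
      simp only [Complex.add_re, Complex.add_im, Complex.sub_re, Complex.sub_im,
        Complex.normSq_apply] at hw2 ⊢
      nlinarith [hw2]
    rw [show (w + τ ζ).re * (w - τ ζ).re / normSq (w - τ ζ) + (w + τ ζ).im * (w - τ ζ).im / normSq (w - τ ζ)
        = ((w + τ ζ).re * (w - τ ζ).re + (w + τ ζ).im * (w - τ ζ).im) / normSq (w - τ ζ) from
      (add_div _ _ _).symm, hnum]
  have hcont : Continuous (fun θ : ℝ => Φ ((ρ:ℂ) * Complex.exp (θ * I))) :=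
    hΦd.continuousOn.comp_continuous (continuous_circle ρ) (fun θ => circle_mem_closedBall hρ θ)
  have hint : IntervalIntegrable (fun θ : ℝ => Φ ((ρ:ℂ) * Complex.exp (θ * I))) volume 0 (2*π) :=
    hcont.intervalIntegrable _ _
  have hmean := circleMean hρ hΦd
  have hre_int := Complex.reCLM.intervalIntegral_comp_comm hint
  calc ∫ θ in (0:ℝ)..2*π, PP r (τ ((ρ:ℂ) * Complex.exp (θ * I))) t
      = ∫ θ in (0:ℝ)..2*π, (Φ ((ρ:ℂ) * Complex.exp (θ * I))).re := by
        apply intervalIntegral.integral_congr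
        intro θ _
        exact (hre _ (circle_mem_closedBall hρ θ)).symm
    _ = (∫ θ in (0:ℝ)..2*π, Φ ((ρ:ℂ) * Complex.exp (θ * I))).re := by
        exact hre_int
    _ = (2*(π:ℂ) * Φ 0).re := by rw [hmean]
    _ = 2*π * PP r (τ 0) t := by
        rw [← hre 0 h0mem]
        rw [show (2*(π:ℂ)) = ((2*π : ℝ):ℂ) from by push_cast; ring,
          Complex.mul_re]
        simp

-- the key composition lemma
set_option maxHeartbeats 2000000 in
lemma comp_bound {α z₀ : ℂ} (hz₀ : Complex.abs z₀ < 1) (hα : Complex.abs α = 1) :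
    ∃ M : ℝ, 0 < M ∧ ∀ F : ℂ → ℂ, DifferentiableOn ℂ F (Metric.ball 0 1) →
      ∀ ρ ∈ Set.Ico (0:ℝ) 1, ∃ r ∈ Set.Ico (0:ℝ) 1,
        diskInt (fun z => F (moeb α z₀ z)) ρ ≤ M * diskInt F r := by
  set a := Complex.abs z₀ with ha
  have ha0 : 0 ≤ a := Complex.abs.nonneg _
  have ha1 : a < 1 := hz₀
  have h1a : 0 < 1 - a^2 := by nlinarith
  refine ⟨8/(1-a^2), by positivity, ?_⟩
  intro F hF ρ ⟨hρ0, hρ1⟩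
  set τ := moeb α z₀ with hτ
  set δ : ℝ := (1 - ρ^2) * (1 - a^2) / (1 + a)^2 with hδ
  have hδpos : 0 < δ := by
    apply div_pos (mul_pos (by nlinarith) h1a) (by positivity)
  have hδle : δ ≤ 1 - a^2 := by
    rw [hδ]
    rw [div_le_iff₀ (by positivity)]
    nlinarith
  have hδ1 : δ ≤ 1 := by nlinarith
  set r : ℝ := Real.sqrt (1 - δ/2) with hr
  have hr2 : r^2 = 1 - δ/2 := Real.sq_sqrt (by linarith)
  have hrnn : 0 ≤ r := Real.sqrt_nonneg _
  have hr0 : 0 < r := Real.sqrt_pos.mpr (by linarith)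
  have hr1 : r < 1 := by nlinarith
  have hra2 : a^2 < r^2 := by rw [hr2]; nlinarith
  have hra : a < r := by nlinarith
  clear_value δ r
  -- bounds on the Poisson kernel at τ 0
  have h0mem : (0:ℂ) ∈ closedBall (0:ℂ) ρ := by simp [hρ0]
  have habs_p : Complex.abs (τ 0) = a := by
    rw [hτ, ha]
    simp [moeb, map_mul, hα]
  have hr2a : (1-a^2)/2 ≤ r^2 - a^2 := by rw [hr2]; linarith
  have hrpa : r + a ≤ 2 := by linarith
  have hrapos : 0 < r - a := sub_pos.mpr hra
  have h2 : (1-a^2)/4 ≤ r - a := by nlinarith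
  have hPP0 : ∀ t : ℝ, PP r (τ 0) t ≤ 8/(1-a^2) := by
    intro t
    have hp1 : r - a ≤ Complex.abs ((r:ℂ) * Complex.exp (t * I) - τ 0) := by
      have hn := norm_sub_norm_le ((r:ℂ) * Complex.exp (t * I)) (τ 0)
      rw [Complex.norm_eq_abs, Complex.norm_eq_abs, Complex.norm_eq_abs, habs_p] at hn
      have : Complex.abs ((r:ℂ) * Complex.exp (t * I)) = r := by
        rw [map_mul, Complex.abs_ofReal, abs_of_pos hr0, Complex.abs_exp_ofReal_mul_I, mul_one]
      rw [this] at hn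
      exact hn
    have hlow : (r-a)^2 ≤ normSq ((r:ℂ) * Complex.exp (t * I) - τ 0) := by
      rw [← Complex.sq_abs]
      exact pow_le_pow_left₀ (le_of_lt hrapos) hp1 2
    have hnum : r^2 - normSq (τ 0) = r^2 - a^2 := by
      rw [← Complex.sq_abs, habs_p]
    rw [PP, hnum]
    calc (r^2 - a^2) / normSq ((r:ℂ) * Complex.exp (t * I) - τ 0)
        ≤ (r^2 - a^2) / (r-a)^2 := by
          apply div_le_div_of_nonneg_left (by nlinarith) (by positivity) hlow
      _ ≤ 8/(1-a^2) := by
          rw [div_le_div_iff₀ (by positivity) h1a]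
          nlinarith [mul_le_mul_of_nonneg_left h2 (le_of_lt hrapos),
            mul_le_mul_of_nonneg_right hrpa (le_of_lt h1a)]
  have hmap : ∀ ζ ∈ closedBall (0:ℂ) ρ, Complex.abs (τ ζ) < r := by
    intro ζ hζ
    have hζρ : Complex.abs ζ ≤ ρ := by
      simpa [Complex.dist_eq, Complex.norm_eq_abs] using (mem_closedBall.mp hζ)
    have := normSq_moeb_le hz₀ hα hρ1 hζρ
    rw [← hτ, ← ha, ← hδ] at this
    have h2 : normSq (τ ζ) < r^2 := by rw [hr2]; linarith
    rw [← Complex.sq_abs] at h2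
    nlinarith [Complex.abs.nonneg (τ ζ)]
  have hτd : DifferentiableOn ℂ τ (closedBall 0 ρ) := by
    intro ζ hζ
    have hζρ : Complex.abs ζ ≤ ρ := by
      simpa [Complex.dist_eq, Complex.norm_eq_abs] using (mem_closedBall.mp hζ)
    exact (differentiableAt_moeb α z₀ (den_ne (by nlinarith [Complex.abs.nonneg ζ]))).differentiableWithinAt
  have hFd : DifferentiableOn ℂ F (closedBall 0 r) :=
    hF.mono (closedBall_subset_ball hr1)
  refine ⟨r, ⟨hrnn, hr1⟩, ?_⟩
  -- continuity facts
  have hcτ : Continuous (fun θ : ℝ => τ ((ρ:ℂ) * Complex.exp (θ * I))) :=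
    hτd.continuousOn.comp_continuous (continuous_circle ρ) (fun θ => circle_mem_closedBall hρ0 θ)
  have hcF : Continuous (fun t : ℝ => ‖F ((r:ℂ) * Complex.exp (t * I))‖^2) :=
    ((hFd.continuousOn.comp_continuous (continuous_circle r)
      (fun t => circle_mem_closedBall hrnn t)).norm.pow 2)
  have hcFτ : Continuous (fun θ : ℝ => ‖F (τ ((ρ:ℂ) * Complex.exp (θ * I)))‖^2) := by
    have : Continuous (fun θ : ℝ => F (τ ((ρ:ℂ) * Complex.exp (θ * I)))) := by
      apply hFd.continuousOn.comp_continuous hcτ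
      intro θ
      have := hmap _ (circle_mem_closedBall hρ0 θ)
      simp only [mem_closedBall, Complex.dist_eq, sub_zero]
      exact le_of_lt this
    exact this.norm.pow 2
  -- the 2-variable kernel
  set f : ℝ → ℝ → ℝ := fun θ t =>
    PP r (τ ((ρ:ℂ) * Complex.exp (θ * I))) t * ‖F ((r:ℂ) * Complex.exp (t * I))‖^2 with hf
  have habs_ne : ∀ θ t : ℝ, normSq ((r:ℂ) * Complex.exp (t * I) - τ ((ρ:ℂ) * Complex.exp (θ * I))) ≠ 0 := by
    intro θ t
    rw [Ne, Complex.normSq_eq_zero, sub_eq_zero]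
    intro h
    have h1 := hmap _ (circle_mem_closedBall hρ0 θ)
    rw [← h] at h1
    rw [map_mul, Complex.abs_ofReal, abs_of_pos hr0, Complex.abs_exp_ofReal_mul_I, mul_one] at h1
    exact lt_irrefl _ h1
  have hcf : Continuous (Function.uncurry f) := by
    have huncurry : Function.uncurry f = fun p : ℝ × ℝ =>
        (r^2 - normSq (τ ((ρ:ℂ) * Complex.exp (p.1 * I)))) /
          normSq ((r:ℂ) * Complex.exp (p.2 * I) - τ ((ρ:ℂ) * Complex.exp (p.1 * I))) *
        ‖F ((r:ℂ) * Complex.exp (p.2 * I))‖^2 := rfl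
    rw [huncurry]
    apply Continuous.mul
    · apply Continuous.div
      · apply Continuous.sub continuous_const
        exact Complex.continuous_normSq.comp (hcτ.comp continuous_fst)
      · apply Complex.continuous_normSq.comp
        exact ((continuous_circle r).comp continuous_snd).sub (hcτ.comp continuous_fst)
      · intro p
        exact habs_ne p.1 p.2
    · exact hcF.comp continuous_snd
  -- integrability on the product
  set I2 : Set ℝ := Set.Ioc (0:ℝ) (2*π) with hI2
  have h2π0 : (0:ℝ) ≤ 2*π := by positivity
  have hintf : IntegrableOn (Function.uncurry f) (I2 ×ˢ I2) volume := by
    apply (hcf.continuousOn.integrableOn_compact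
      ((isCompact_Icc : IsCompact (Set.Icc (0:ℝ) (2*π))).prod isCompact_Icc)).mono_set
    exact Set.prod_mono Set.Ioc_subset_Icc_self Set.Ioc_subset_Icc_self
  have hprod : Integrable (Function.uncurry f)
      ((volume.restrict I2).prod (volume.restrict I2)) := by
    rw [Measure.prod_restrict]
    rw [← MeasureTheory.Measure.volume_eq_prod]
    exact hintf
  have hswap := MeasureTheory.integral_integral_swap hprod
  have hJint : Integrable (fun θ => ∫ t, f θ t ∂(volume.restrict I2)) (volume.restrict I2) :=
    hprod.integral_prod_left
  set J : ℝ → ℝ := fun θ => ∫ t in (0:ℝ)..2*π, f θ t with hJ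
  have hJeq : J = fun θ => ∫ t, f θ t ∂(volume.restrict I2) := by
    funext θ
    rw [hJ]
    exact intervalIntegral.integral_of_le h2π0
  have hJii : IntervalIntegrable J volume 0 (2*π) := by
    rw [intervalIntegrable_iff, Set.uIoc_of_le h2π0]
    rw [hJeq]
    exact hJint
  -- pointwise Poisson bound
  have hpb : ∀ θ : ℝ, ‖F (τ ((ρ:ℂ) * Complex.exp (θ * I)))‖^2 ≤ (2*π)⁻¹ * J θ := by
    intro θ
    exact poisson_bound hr0 hFd (hmap _ (circle_mem_closedBall hρ0 θ))
  have hmono : ∫ θ in (0:ℝ)..2*π, ‖F (τ ((ρ:ℂ) * Complex.exp (θ * I)))‖^2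
      ≤ ∫ θ in (0:ℝ)..2*π, (2*π)⁻¹ * J θ := by
    apply intervalIntegral.integral_mono_on h2π0 (hcFτ.intervalIntegrable _ _)
      (hJii.const_mul _)
    intro θ _
    exact hpb θ
  -- inner integral over θ via the mean value property
  have hInner : ∀ t : ℝ, ∫ θ, f θ t ∂(volume.restrict I2)
      = 2*π * PP r (τ 0) t * ‖F ((r:ℂ) * Complex.exp (t * I))‖^2 := by
    intro t
    have h1 : ∫ θ, f θ t ∂(volume.restrict I2)
        = ∫ θ, (PP r (τ ((ρ:ℂ) * Complex.exp (θ * I))) t) * ‖F ((r:ℂ) * Complex.exp (t * I))‖^2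
          ∂(volume.restrict I2) := by simp only [hf]
    rw [h1, MeasureTheory.integral_mul_const]
    rw [show ∫ θ, (PP r (τ ((ρ:ℂ) * Complex.exp (θ * I))) t) ∂(volume.restrict I2)
        = ∫ θ in (0:ℝ)..2*π, (PP r (τ ((ρ:ℂ) * Complex.exp (θ * I))) t) from
      (intervalIntegral.integral_of_le h2π0).symm]
    rw [poisson_mean hρ0 hτd hmap t]
  -- final chain
  have habs_ne0 : ∀ t : ℝ, normSq ((r:ℂ) * Complex.exp (t * I) - τ 0) ≠ 0 := by
    intro t
    rw [Ne, Complex.normSq_eq_zero, sub_eq_zero]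
    intro h
    have h1 := hmap 0 h0mem
    rw [← h, map_mul, Complex.abs_ofReal, abs_of_pos hr0, Complex.abs_exp_ofReal_mul_I,
      mul_one] at h1
    exact lt_irrefl _ h1
  have hcPP0 : Continuous (fun t : ℝ => PP r (τ 0) t) := by
    simp only [PP]
    exact continuous_const.div
      (Complex.continuous_normSq.comp ((continuous_circle r).sub continuous_const)) habs_ne0
  have hfinal_mono : ∫ t in (0:ℝ)..2*π, 2*π * PP r (τ 0) t * ‖F ((r:ℂ) * Complex.exp (t * I))‖^2
      ≤ ∫ t in (0:ℝ)..2*π, (2*π * (8/(1-a^2))) * ‖F ((r:ℂ) * Complex.exp (t * I))‖^2 := by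
    apply intervalIntegral.integral_mono_on h2π0
    · exact ((continuous_const.mul hcPP0).mul hcF).intervalIntegrable _ _
    · exact (continuous_const.mul hcF).intervalIntegrable _ _
    · intro t _
      have h3 := hPP0 t
      have h4 : (0:ℝ) ≤ ‖F ((r:ℂ) * Complex.exp (t * I))‖^2 := by positivity
      have h5 : 2*π * PP r (τ 0) t ≤ 2*π * (8/(1-a^2)) :=
        mul_le_mul_of_nonneg_left h3 (by positivity)
      exact mul_le_mul_of_nonneg_right h5 h4
  have hJswap : ∫ θ in (0:ℝ)..2*π, J θ
      = ∫ t in (0:ℝ)..2*π, 2*π * PP r (τ 0) t * ‖F ((r:ℂ) * Complex.exp (t * I))‖^2 := by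
    rw [intervalIntegral.integral_of_le h2π0]
    calc ∫ θ, J θ ∂(volume.restrict I2)
        = ∫ θ, (∫ t, f θ t ∂(volume.restrict I2)) ∂(volume.restrict I2) := by rw [hJeq]
      _ = ∫ t, (∫ θ, f θ t ∂(volume.restrict I2)) ∂(volume.restrict I2) := hswap
      _ = ∫ t, 2*π * PP r (τ 0) t * ‖F ((r:ℂ) * Complex.exp (t * I))‖^2
            ∂(volume.restrict I2) := by
          apply MeasureTheory.integral_congr_ae
          exact Filter.Eventually.of_forall hInner
      _ = ∫ t in (0:ℝ)..2*π, 2*π * PP r (τ 0) t * ‖F ((r:ℂ) * Complex.exp (t * I))‖^2 :=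
          (intervalIntegral.integral_of_le h2π0).symm
  have hLHS : diskInt (fun z => F (moeb α z₀ z)) ρ
      = (2*π)⁻¹ * ∫ θ in (0:ℝ)..2*π, ‖F (τ ((ρ:ℂ) * Complex.exp (θ * I)))‖^2 := by
    rw [diskInt, ← hτ]
  have hπ : (0:ℝ) < (2*π)⁻¹ := by positivity
  have hπ' : (2*π) ≠ (0:ℝ) := by positivity
  rw [hLHS]
  calc (2*π)⁻¹ * ∫ θ in (0:ℝ)..2*π, ‖F (τ ((ρ:ℂ) * Complex.exp (θ * I)))‖^2
      ≤ (2*π)⁻¹ * ∫ θ in (0:ℝ)..2*π, (2*π)⁻¹ * J θ :=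
        mul_le_mul_of_nonneg_left hmono (le_of_lt hπ)
    _ = (2*π)⁻¹ * ((2*π)⁻¹ * ∫ θ in (0:ℝ)..2*π, J θ) := by
        rw [intervalIntegral.integral_const_mul]
    _ = (2*π)⁻¹ * ((2*π)⁻¹ * ∫ t in (0:ℝ)..2*π, 2*π * PP r (τ 0) t
          * ‖F ((r:ℂ) * Complex.exp (t * I))‖^2) := by rw [hJswap]
    _ ≤ (2*π)⁻¹ * ((2*π)⁻¹ * ∫ t in (0:ℝ)..2*π, (2*π * (8/(1-a^2)))
          * ‖F ((r:ℂ) * Complex.exp (t * I))‖^2) := by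
        apply mul_le_mul_of_nonneg_left _ (le_of_lt hπ)
        exact mul_le_mul_of_nonneg_left hfinal_mono (le_of_lt hπ)
    _ = 8/(1-a^2) * diskInt F r := by
        rw [intervalIntegral.integral_const_mul, diskInt]
        have h2πinv : (2*π)⁻¹ * (2*π) = 1 := inv_mul_cancel₀ hπ'
        linear_combination (8/(1-a^2) * (2*π)⁻¹ *
          ∫ θ in (0:ℝ)..2*π, ‖F ((r:ℂ) * Complex.exp ((θ:ℂ) * I))‖ ^ 2) * h2πinv

lemma diskInt_nonneg (g : ℂ → ℂ) (ρ : ℝ) : 0 ≤ diskInt g ρ := by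
  apply mul_nonneg (by positivity)
  apply intervalIntegral.integral_nonneg (by positivity)
  intro x _
  positivity

lemma diskInt_congr_ball {u v : ℂ → ℂ} (h : ∀ z : ℂ, Complex.abs z < 1 → u z = v z)
    {ρ : ℝ} (hρ0 : 0 ≤ ρ) (hρ1 : ρ < 1) : diskInt u ρ = diskInt v ρ := by
  rw [diskInt, diskInt]
  congr 1
  apply intervalIntegral.integral_congr
  intro θ _
  have habs : Complex.abs ((ρ:ℂ) * Complex.exp ((θ:ℂ) * I)) < 1 := by
    rw [map_mul, Complex.abs_ofReal, _root_.abs_of_nonneg hρ0, Complex.abs_exp_ofReal_mul_I,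
      mul_one]
    exact hρ1
  dsimp only
  rw [h _ habs]

lemma diskInt_conj_reflect (u : ℂ → ℂ) (r : ℝ) :
    diskInt (fun w => (starRingEnd ℂ) (u ((starRingEnd ℂ) w))) r = diskInt u r := by
  rw [diskInt, diskInt]
  congr 1
  set v : ℝ → ℝ := fun t => ‖u ((r:ℂ) * Complex.exp ((t:ℂ) * I))‖ ^ 2 with hv
  have hper : Function.Periodic v (2*π) := by
    intro t
    rw [hv]
    simp only
    congr 2
    push_cast
    rw [add_mul, Complex.exp_add, Complex.exp_two_pi_mul_I, mul_one]
  have hfun : ∀ θ ∈ Set.uIcc (0:ℝ) (2*π),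
      ‖(starRingEnd ℂ) (u ((starRingEnd ℂ) ((r:ℂ) * Complex.exp ((θ:ℂ) * I))))‖ ^ 2 = v (-θ) := by
    intro θ _
    rw [RCLike.norm_conj, hv]
    simp only
    congr 3
    rw [map_mul, Complex.conj_ofReal, ← Complex.exp_conj]
    congr 1
    rw [map_mul, Complex.conj_ofReal, Complex.conj_I]
    push_cast
    ring
  rw [intervalIntegral.integral_congr hfun, intervalIntegral.integral_comp_neg v]
  have := hper.intervalIntegral_add_eq (-(2*π)) 0
  simp only [neg_add_cancel, zero_add] at this
  simpa using this


-- glue lemmas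
lemma abs_moebInv_lt {α z₀ : ℂ} (hz₀ : Complex.abs z₀ < 1) (hα : Complex.abs α = 1)
    {w : ℂ} (hw : Complex.abs w < 1) : Complex.abs (moebInv α z₀ w) < 1 := by
  rw [moebInv_eq hα]
  apply abs_moeb_lt _ _ hw
  · rw [Complex.abs.map_neg, map_mul, hα, one_mul]; exact hz₀
  · rw [Complex.abs_conj]; exact hα

lemma mem_ball_iff_abs {w : ℂ} : w ∈ Metric.ball (0:ℂ) 1 ↔ Complex.abs w < 1 := by
  simp [Complex.dist_eq, Complex.norm_eq_abs]

lemma moebInv_diffOn {α z₀ : ℂ} (hz₀ : Complex.abs z₀ < 1) (hα : Complex.abs α = 1) :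
    DifferentiableOn ℂ (moebInv α z₀) (Metric.ball 0 1) := by
  rw [moebInv_eq hα]
  intro w hw
  have hw1 : Complex.abs w < 1 := mem_ball_iff_abs.mp hw
  have hd : (1:ℂ) - (starRingEnd ℂ) (-(α*z₀)) * w ≠ 0 := by
    apply den_ne
    rw [Complex.abs.map_neg, map_mul, hα, one_mul]
    nlinarith [Complex.abs.nonneg w, Complex.abs.nonneg z₀]
  exact (differentiableAt_moeb _ _ hd).differentiableWithinAt

lemma Gdiff {α z₀ : ℂ} (hz₀ : Complex.abs z₀ < 1) (hα : Complex.abs α = 1)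
    (g : ℂ → ℂ) (hg : DifferentiableOn ℂ g (Metric.ball 0 1)) :
    DifferentiableOn ℂ (fun w => (starRingEnd ℂ) (g (moeb α z₀ ((starRingEnd ℂ) w))))
      (Metric.ball 0 1) := by
  intro w hw
  have hw1 : Complex.abs w < 1 := mem_ball_iff_abs.mp hw
  apply DifferentiableAt.differentiableWithinAt
  apply differentiableAt_conj_comp (H := fun ζ => g (moeb α z₀ ζ))
  have hcw : Complex.abs ((starRingEnd ℂ) w) < 1 := by rw [Complex.abs_conj]; exact hw1
  have hprod1 : Complex.abs z₀ * Complex.abs ((starRingEnd ℂ) w) < 1 := by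
    nlinarith [Complex.abs.nonneg ((starRingEnd ℂ) w), Complex.abs.nonneg z₀]
  have h1 : DifferentiableAt ℂ (moeb α z₀) ((starRingEnd ℂ) w) :=
    differentiableAt_moeb α z₀ (den_ne hprod1)
  have h2 : DifferentiableAt ℂ g (moeb α z₀ ((starRingEnd ℂ) w)) :=
    hg.differentiableAt (Metric.isOpen_ball.mem_nhds
      (mem_ball_iff_abs.mpr (abs_moeb_lt hz₀ hα hcw)))
  exact DifferentiableAt.comp _ h2 h1

lemma conjug_diffOn {α z₀ : ℂ} (hz₀ : Complex.abs z₀ < 1) (hα : Complex.abs α = 1)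
    (g : ℂ → ℂ) (hg : DifferentiableOn ℂ g (Metric.ball 0 1)) :
    DifferentiableOn ℂ (conjug α z₀ g) (Metric.ball 0 1) := by
  have : conjug α z₀ g =
      (fun w => (starRingEnd ℂ) (g (moeb α z₀ ((starRingEnd ℂ) w)))) ∘ (moebInv α z₀) := rfl
  rw [this]
  apply DifferentiableOn.comp (Gdiff hz₀ hα g hg) (moebInv_diffOn hz₀ hα)
  intro w hw
  exact mem_ball_iff_abs.mpr (abs_moebInv_lt hz₀ hα (mem_ball_iff_abs.mp hw))

lemma conjug_bound {α z₀ : ℂ} (hz₀ : Complex.abs z₀ < 1) (hα : Complex.abs α = 1) :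
    ∃ M : ℝ, 0 < M ∧ ∀ g : ℂ → ℂ, DifferentiableOn ℂ g (Metric.ball 0 1) →
      ∀ ρ ∈ Set.Ico (0:ℝ) 1, ∃ r ∈ Set.Ico (0:ℝ) 1,
        diskInt (conjug α z₀ g) ρ ≤ M * diskInt g r := by
  have hz₀' : Complex.abs (-(α*z₀)) < 1 := by
    rw [Complex.abs.map_neg, map_mul, hα, one_mul]; exact hz₀
  have hα' : Complex.abs ((starRingEnd ℂ) α) = 1 := by rw [Complex.abs_conj]; exact hα
  obtain ⟨M₁, hM₁, h₁⟩ := comp_bound hz₀' hα'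
  obtain ⟨M₂, hM₂, h₂⟩ := comp_bound hz₀ hα
  refine ⟨M₁ * M₂, mul_pos hM₁ hM₂, ?_⟩
  intro g hg ρ hρ
  set G : ℂ → ℂ := fun w => (starRingEnd ℂ) (g (moeb α z₀ ((starRingEnd ℂ) w))) with hG
  have hGd : DifferentiableOn ℂ G (Metric.ball 0 1) := Gdiff hz₀ hα g hg
  obtain ⟨r₁, hr₁, hb₁⟩ := h₁ G hGd ρ hρ
  obtain ⟨r₂, hr₂, hb₂⟩ := h₂ g hg r₁ hr₁
  refine ⟨r₂, hr₂, ?_⟩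
  have he : conjug α z₀ g = fun z => G (moeb ((starRingEnd ℂ) α) (-(α*z₀)) z) := by
    funext z
    rw [conjug, ← moebInv_eq hα]
  have hrefl : diskInt G r₁ = diskInt (fun w => g (moeb α z₀ w)) r₁ :=
    diskInt_conj_reflect (fun w => g (moeb α z₀ w)) r₁
  calc diskInt (conjug α z₀ g) ρ
      = diskInt (fun z => G (moeb ((starRingEnd ℂ) α) (-(α*z₀)) z)) ρ := by rw [he]
    _ ≤ M₁ * diskInt G r₁ := hb₁
    _ = M₁ * diskInt (fun w => g (moeb α z₀ w)) r₁ := by rw [hrefl]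
    _ ≤ M₁ * (M₂ * diskInt g r₂) := mul_le_mul_of_nonneg_left hb₂ hM₁.le
    _ = M₁ * M₂ * diskInt g r₂ := by ring

lemma conjug_conjug {α z₀ : ℂ} (hz₀ : Complex.abs z₀ < 1) (hα : Complex.abs α = 1)
    (g : ℂ → ℂ) {z : ℂ} (hz : Complex.abs z < 1) :
    conjug α z₀ (conjug α z₀ g) z = g z := by
  rw [conjug, conjug]
  have hu : Complex.abs (moebInv α z₀ z) < 1 := abs_moebInv_lt hz₀ hα hz
  have hcu : Complex.abs ((starRingEnd ℂ) (moebInv α z₀ z)) < 1 := by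
    rw [Complex.abs_conj]; exact hu
  rw [moebInv_moeb hz₀ hα hcu]
  simp only [Complex.conj_conj]
  rw [moeb_moebInv hz₀ hα hz]

lemma conjug_on_geodesic {α z₀ : ℂ} (hz₀ : Complex.abs z₀ < 1) (hα : Complex.abs α = 1)
    (g : ℂ → ℂ) {t : ℝ} (ht : Complex.abs ((t:ℝ):ℂ) < 1) :
    conjug α z₀ g (moeb α z₀ (t:ℂ)) = (starRingEnd ℂ) (g (moeb α z₀ (t:ℂ))) := by
  rw [conjug, moebInv_moeb hz₀ hα ht, Complex.conj_ofReal]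


/-- Sufficiency direction for hyperbolic geodesic segments: if γ is the image
of a real segment [a,b] ⊂ (0,1) under a disk automorphism φ, then there is a
constant C > 0 such that for every g ∈ H² the function
h(z) = conj (g (φ (conj (φ⁻¹ z)))) lies in H², satisfies h = ḡ on γ and
‖h‖₂ ≤ C ‖g‖₂. -/
theorem stmt14 (z₀ α : ℂ) (hz₀ : ‖z₀‖ < 1) (hα : ‖α‖ = 1)
    (a b : ℝ) (ha : 0 < a) (hab : a ≤ b) (hb : b < 1) :
    ∃ C : ℝ, 0 < C ∧ ∀ g : ℂ → ℂ, DifferentiableOn ℂ g (Metric.ball 0 1) →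
      (∀ t : ℝ, t ∈ Set.Icc a b →
        conjug α z₀ g (moeb α z₀ (t : ℂ)) = (starRingEnd ℂ) (g (moeb α z₀ (t : ℂ)))) ∧
      DifferentiableOn ℂ (conjug α z₀ g) (Metric.ball 0 1) ∧
      h2norm (conjug α z₀ g) ≤ C * h2norm g := by
  obtain ⟨M, hM, hmaster⟩ := conjug_bound hz₀ hα
  refine ⟨Real.sqrt M, Real.sqrt_pos.mpr hM, ?_⟩
  intro g hg
  haveI hne : Nonempty (Set.Ico (0:ℝ) 1) := ⟨⟨0, le_refl 0, one_pos⟩⟩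
  refine ⟨?_, conjug_diffOn hz₀ hα g hg, ?_⟩
  · rintro t ⟨hta, htb⟩
    have ht : Complex.abs ((t:ℝ):ℂ) < 1 := by
      rw [Complex.abs_ofReal, _root_.abs_of_pos (lt_of_lt_of_le ha hta)]
      exact lt_of_le_of_lt htb hb
    exact conjug_on_geodesic hz₀ hα g ht
  · by_cases hB : BddAbove (Set.range fun ρ : Set.Ico (0:ℝ) 1 => diskInt g (ρ:ℝ))
    · have hle : ∀ r ∈ Set.Ico (0:ℝ) 1, diskInt g r ≤ h2normSq g := by
        intro r hr
        exact le_ciSup hB ⟨r, hr⟩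
      have hub : ∀ ρ : Set.Ico (0:ℝ) 1, diskInt (conjug α z₀ g) (ρ:ℝ) ≤ M * h2normSq g := by
        rintro ⟨ρ, hρ⟩
        obtain ⟨r, hr, hbd⟩ := hmaster g hg ρ hρ
        exact hbd.trans (mul_le_mul_of_nonneg_left (hle r hr) hM.le)
      have hSle : h2normSq (conjug α z₀ g) ≤ M * h2normSq g := ciSup_le hub
      have hS0 : 0 ≤ h2normSq g :=
        (diskInt_nonneg g 0).trans (hle 0 ⟨le_refl 0, one_pos⟩)
      rw [h2norm, h2norm]
      calc Real.sqrt (h2normSq (conjug α z₀ g))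
          ≤ Real.sqrt (M * h2normSq g) := Real.sqrt_le_sqrt hSle
        _ = Real.sqrt M * Real.sqrt (h2normSq g) := Real.sqrt_mul hM.le _
    · have h0 : h2normSq g = 0 := Real.iSup_of_not_bddAbove hB
      have hB2 : ¬ BddAbove
          (Set.range fun ρ : Set.Ico (0:ℝ) 1 => diskInt (conjug α z₀ g) (ρ:ℝ)) := by
        rintro ⟨B, hBub⟩
        apply hB
        refine ⟨M * B, ?_⟩
        rintro x ⟨⟨ρ, hρ⟩, rfl⟩
        simp only
        obtain ⟨r, hr, hbd⟩ := hmaster (conjug α z₀ g) (conjug_diffOn hz₀ hα g hg) ρ hρ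
        have h1 : diskInt g ρ = diskInt (conjug α z₀ (conjug α z₀ g)) ρ :=
          diskInt_congr_ball (fun z hzb => (conjug_conjug hz₀ hα g hzb).symm) hρ.1 hρ.2
        have h2 : diskInt (conjug α z₀ g) r ≤ B := hBub ⟨⟨r, hr⟩, rfl⟩
        calc diskInt g ρ = diskInt (conjug α z₀ (conjug α z₀ g)) ρ := h1
          _ ≤ M * diskInt (conjug α z₀ g) r := hbd
          _ ≤ M * B := mul_le_mul_of_nonneg_left h2 hM.le
      have h0' : h2normSq (conjug α z₀ g) = 0 := Real.iSup_of_not_bddAbove hB2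
      rw [h2norm, h2norm, h0, h0']
      simp
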